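/- Let n ≥ 1 and let k₁, …, kₙ be positive integers with N = k₁ + ⋯ + kₙ. Then the number of shuffle permutations of type (k₁, …, kₙ) equals (k₁·k₂·⋯·kₙ) / ((k₁+k₂+⋯+kₙ)(k₂+⋯+kₙ)⋯kₙ) times the multinomial coefficient N!/(k₁!·k₂!·⋯·kₙ!). Equivalently, avoiding division: (card of the set of shuffle permutations of type (k₁,…,kₙ)) · (∏_{s=1}^{n} (kₛ + k_{s+1} + ⋯ + kₙ)) · (∏_{i=1}^{n} kᵢ!) = (∏_{i=1}^{n} kᵢ) · N!. -/

import Mathlib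

/-!
Relabel a permutation `σ` by `f = blockIndex ∘ σ⁻¹`, so that `f y` is the block whose image
contains `y`. A permutation increasing on the blocks is determined by `f`, and every labelling
whose fibres have sizes `k₁, …, kₙ` arises this way; the condition on the first elements of the
blocks says that the labels first occur in the order `1, …, n`. In such a labelling the least
element has label `1`; choosing the other `k₁ - 1` elements of label `1` leaves a labelling of
the same kind, of type `(k₂, …, kₙ)`, on the rest. Hence there are `∏ₛ C(Nₛ - 1, kₛ - 1)` of them,
where `Nₛ = kₛ + ⋯ + kₙ`, and `C(Nₛ - 1, kₛ - 1) · Nₛ · kₛ! · Nₛ₊₁! = kₛ · Nₛ!` telescopes to the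
stated identity.
-/

open Finset Nat

/-- `blockStart k s` is the 0-indexed starting position of the `s`-th block,
i.e. `k 0 + ⋯ + k (s-1)`. -/
def blockStart (k : ℕ → ℕ) (s : ℕ) : ℕ := ∑ i ∈ Finset.range s, k i

/-- `σ` is a shuffle permutation of type `(k 0, …, k (n-1))`: it is strictly
increasing on each consecutive block, and the images of the first elements of
the blocks increase with the block index. -/
def IsShuffle (n : ℕ) (k : ℕ → ℕ) {N : ℕ} (σ : Equiv.Perm (Fin N)) : Prop :=
  (∀ s < n, ∀ i j : Fin N,
    blockStart k s ≤ (i : ℕ) → (j : ℕ) < blockStart k (s + 1) → i < j → σ i < σ j) ∧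
  (∀ t < n, ∀ s < t, ∀ i j : Fin N,
    (i : ℕ) = blockStart k s → (j : ℕ) = blockStart k t → σ i < σ j)

section FiberwiseMonotone

variable {α ι : Type*} [LinearOrder α] [Finite α]

lemma nonempty_orderIso_of_card_eq {β : Type*} [LinearOrder β] [Finite β]
    (h : Nat.card α = Nat.card β) : Nonempty (α ≃o β) := by
  cases nonempty_fintype α
  cases nonempty_fintype β
  exact ⟨(Fintype.orderIsoFinOfCardEq α rfl).symm.trans
    (Fintype.orderIsoFinOfCardEq β (by simpa [Nat.card_eq_fintype_card] using h.symm))⟩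

theorem Equiv.Perm.eq_of_strictMonoOn_fibers {g : α → ι} {σ τ : Equiv.Perm α}
    (hσ : ∀ s, StrictMonoOn σ {x | g x = s}) (hτ : ∀ s, StrictMonoOn τ {x | g x = s})
    (h : g ∘ σ.symm = g ∘ τ.symm) : σ = τ := by
  ext x
  have hrange : ∀ ρ : Equiv.Perm α, Set.range (fun y : {y // g y = g x} => ρ y) =
      {z | g (ρ.symm z) = g x} := fun ρ => by
    ext z
    exact ⟨by rintro ⟨y, rfl⟩; simpa using y.2, fun hz => ⟨⟨_, hz⟩, by simp⟩⟩
  have hmono : ∀ ρ : Equiv.Perm α, (∀ s, StrictMonoOn ρ {x | g x = s}) →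
      StrictMono (fun y : {y // g y = g x} => ρ y) :=
    fun ρ hρ y y' hyy' => hρ (g x) y.2 y'.2 hyy'
  have heq := (StrictMono.range_inj (hmono σ hσ) (hmono τ hτ)).1 (by
    rw [hrange, hrange]
    ext z
    exact iff_of_eq (congrArg (· = g x) (congrFun h z)))
  exact congrFun heq ⟨x, rfl⟩

theorem exists_perm_strictMonoOn_fibers {g f : α → ι}
    (h : ∀ s, Nat.card {x // f x = s} = Nat.card {x // g x = s}) :
    ∃ σ : Equiv.Perm α, (∀ s, StrictMonoOn σ {x | g x = s}) ∧ g ∘ σ.symm = f := by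
  have e : ∀ s, {x // g x = s} ≃o {x // f x = s} :=
    fun s => (nonempty_orderIso_of_card_eq (h s).symm).some
  let σ : Equiv.Perm α := (Equiv.sigmaFiberEquiv g).symm.trans
    ((Equiv.sigmaCongrRight fun s => (e s).toEquiv).trans (Equiv.sigmaFiberEquiv f))
  have hσ : ∀ s x (hx : g x = s), σ x = e s ⟨x, hx⟩ := by
    rintro s x rfl
    rfl
  refine ⟨σ, fun s x hx y hy hxy => ?_, funext fun y => ?_⟩
  · rw [hσ s x hx, hσ s y hy]
    exact (e s).strictMono hxy
  · obtain ⟨x, rfl⟩ := σ.surjective y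
    change g (σ.symm (σ x)) = f (σ x)
    rw [σ.symm_apply_apply, hσ _ x rfl]
    exact (e (g x) ⟨x, rfl⟩).2.symm

theorem card_perm_strictMonoOn_fibers (g : α → ι) (Q : (α → ι) → Prop) :
    Nat.card {σ : Equiv.Perm α // (∀ s, StrictMonoOn σ {x | g x = s}) ∧ Q (g ∘ σ.symm)}
      = Nat.card {f : α → ι //
          (∀ s, Nat.card {x // f x = s} = Nat.card {x // g x = s}) ∧ Q f} := by
  refine Nat.card_eq_of_bijective
    (fun σ => ⟨g ∘ σ.1.symm, fun s => Nat.card_congr (σ.1.symm.subtypeEquiv fun _ => Iff.rfl),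
      σ.2.2⟩) ⟨fun σ τ h => ?_, fun f => ?_⟩
  · exact Subtype.ext (Equiv.Perm.eq_of_strictMonoOn_fibers σ.2.1 τ.2.1 (congrArg Subtype.val h))
  · obtain ⟨σ, hmono, hσ⟩ := exists_perm_strictMonoOn_fibers f.2.1
    exact ⟨⟨σ, hmono, hσ ▸ f.2.2⟩, Subtype.ext hσ⟩

end FiberwiseMonotone

-- Equivalently, the labels first occur in the order `0, 1, 2, …`.
def IsRestrictedGrowth {α : Type*} [LT α] {n : ℕ} (f : α → Fin n) : Prop :=
  ∀ y, ∀ s < f y, ∃ x < y, f x = s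

lemma IsRestrictedGrowth.eq_zero_of_forall_le {α : Type*} [LinearOrder α] {n : ℕ}
    {f : α → Fin (n + 1)} (hf : IsRestrictedGrowth f) {m : α} (hmin : ∀ x, m ≤ x) : f m = 0 := by
  by_contra hm
  obtain ⟨x, hx, -⟩ := hf m 0 (Fin.pos_iff_ne_zero.2 hm)
  exact (hmin x).not_gt hx

def IsShuffleLabeling {α : Type*} [LT α] {n : ℕ} (k : ℕ → ℕ) (f : α → Fin n) : Prop :=
  (∀ s, Nat.card {x // f x = s} = k s) ∧ IsRestrictedGrowth f

section ConsLabel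

variable {α : Type*} [LinearOrder α] {n : ℕ} (B : Finset α) (g : {x // x ∉ B} → Fin n)

def consLabel (x : α) : Fin (n + 1) :=
  if hx : x ∈ B then 0 else (g ⟨x, hx⟩).succ

variable {B g}

lemma consLabel_eq_zero_iff {x : α} : consLabel B g x = 0 ↔ x ∈ B := by
  unfold consLabel
  split_ifs with hx <;> simp [hx, Fin.succ_ne_zero]

lemma consLabel_of_notMem {x : α} (hx : x ∉ B) : consLabel B g x = (g ⟨x, hx⟩).succ :=
  dif_neg hx

lemma card_consLabel_fiber_zero : Nat.card {x // consLabel B g x = 0} = #B := by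
  simp_rw [consLabel_eq_zero_iff]
  exact Nat.card_eq_finsetCard B

lemma card_consLabel_fiber_succ (t : Fin n) :
    Nat.card {x // consLabel B g x = t.succ} = Nat.card {y // g y = t} := by
  have hnot : ∀ x : {x // consLabel B g x = t.succ}, x.1 ∉ B := fun x hx =>
    Fin.succ_ne_zero t (x.2.symm.trans (consLabel_eq_zero_iff.2 hx))
  exact Nat.card_congr
    { toFun := fun x =>
        ⟨⟨x, hnot x⟩, Fin.succ_injective _ (by rw [← consLabel_of_notMem]; exact x.2)⟩
      invFun := fun y => ⟨y.1, by rw [consLabel_of_notMem y.1.2, y.2]⟩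
      left_inv := fun _ => rfl
      right_inv := fun _ => rfl }

lemma isRestrictedGrowth_consLabel_iff {m : α} (hm : m ∈ B) (hmin : ∀ x, m ≤ x) :
    IsRestrictedGrowth (consLabel B g) ↔ IsRestrictedGrowth g := by
  constructor
  · intro h y s hs
    obtain ⟨x, hxy, hx⟩ := h y (s.succ) (by rwa [consLabel_of_notMem y.2, Fin.succ_lt_succ_iff])
    have hxB : x ∉ B := fun hxB => Fin.succ_ne_zero s (hx ▸ consLabel_eq_zero_iff.2 hxB)
    exact ⟨⟨x, hxB⟩, hxy, Fin.succ_injective _ (by rw [← consLabel_of_notMem]; exact hx)⟩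
  · intro h y s hs
    by_cases hy : y ∈ B
    · simp [consLabel_eq_zero_iff.2 hy] at hs
    rw [consLabel_of_notMem hy] at hs
    cases s using Fin.cases with
    | zero =>
      exact ⟨m, (hmin y).lt_of_ne (by rintro rfl; exact hy hm), consLabel_eq_zero_iff.2 hm⟩
    | succ s =>
      obtain ⟨x, hxy, hx⟩ := h ⟨y, hy⟩ s (Fin.succ_lt_succ_iff.1 hs)
      exact ⟨x, hxy, by rw [consLabel_of_notMem x.2, hx]⟩

lemma isShuffleLabeling_consLabel_iff {k : ℕ → ℕ} {m : α} (hm : m ∈ B) (hmin : ∀ x, m ≤ x) :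
    IsShuffleLabeling k (consLabel B g) ↔ #B = k 0 ∧ IsShuffleLabeling (fun i => k (i + 1)) g := by
  simp only [IsShuffleLabeling, Fin.forall_fin_succ, card_consLabel_fiber_zero,
    card_consLabel_fiber_succ, Fin.val_zero, Fin.val_succ, isRestrictedGrowth_consLabel_iff hm hmin,
    and_assoc]

lemma eq_consLabel [Fintype α] (f : α → Fin (n + 1)) :
    f = consLabel {x | f x = 0} fun y => (f y).pred (by simpa using y.2) := by
  funext x
  by_cases hx : f x = 0
  · rw [hx, consLabel_eq_zero_iff.2 (by simpa using hx)]
  · rw [consLabel_of_notMem (by simpa using hx), Fin.succ_pred]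

lemma card_isShuffleLabeling_succ [Fintype α] (k : ℕ → ℕ) {m : α} (hmin : ∀ x, m ≤ x) :
    Nat.card {f : α → Fin (n + 1) // IsShuffleLabeling k f} =
      Nat.card (Σ B : {B : Finset α // #B = k 0 ∧ m ∈ B},
        {g : {x // x ∉ B.1} → Fin n // IsShuffleLabeling (fun i => k (i + 1)) g}) := by
  classical
  refine (Nat.card_eq_of_bijective (fun p => ⟨consLabel p.1.1 p.2.1,
    (isShuffleLabeling_consLabel_iff p.1.2.2 hmin).2 ⟨p.1.2.1, p.2.2⟩⟩) ⟨?_, ?_⟩).symm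
  · rintro ⟨⟨B, hB⟩, g, hg⟩ ⟨⟨B', hB'⟩, g', hg'⟩ h
    have h : consLabel B g = consLabel B' g' := congrArg Subtype.val h
    obtain rfl : B = B' := Finset.ext fun x => by
      rw [← consLabel_eq_zero_iff (g := g), ← consLabel_eq_zero_iff (g := g'), h]
    obtain rfl : g = g' := funext fun y => Fin.succ_injective _ <| by
      rw [← consLabel_of_notMem, ← consLabel_of_notMem, h]
    rfl
  · rintro ⟨f, hf⟩
    have hm : m ∈ ({x | f x = 0} : Finset α) := by
      simpa using hf.2.eq_zero_of_forall_le hmin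
    rw [eq_consLabel f, isShuffleLabeling_consLabel_iff hm hmin] at hf
    exact ⟨⟨⟨_, hf.1, hm⟩, _, hf.2⟩, Subtype.ext (eq_consLabel f).symm⟩

end ConsLabel

lemma card_finset_card_eq_and_mem {α : Type*} [Fintype α] {m : α} {c : ℕ} (hc : 0 < c) :
    Nat.card {B : Finset α // #B = c ∧ m ∈ B} = (Nat.card α - 1).choose (c - 1) := by
  classical
  have h := card_filter_powersetCard_subset {m} univ c (subset_univ _)
    (by rw [card_singleton]; exact hc)
  rw [card_singleton, Finset.card_univ, ← Nat.card_eq_fintype_card] at h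
  rw [← h, Nat.card_eq_fintype_card, Fintype.card_subtype]
  congr 1
  ext B
  simp

theorem card_isShuffleLabeling {α : Type*} [LinearOrder α] [Finite α] (n : ℕ) (k : ℕ → ℕ)
    (hk : ∀ i < n, 0 < k i) (hα : Nat.card α = ∑ i ∈ range n, k i) :
    Nat.card {f : α → Fin n // IsShuffleLabeling k f}
      = ∏ s ∈ range n, (∑ i ∈ Ico s n, k i - 1).choose (k s - 1) := by
  cases nonempty_fintype α
  induction n generalizing k α with
  | zero =>
    have : IsEmpty α := Fintype.card_eq_zero_iff.1 (by simpa using hα)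
    rw [prod_range_zero, Nat.card_eq_one_iff_unique]
    refine ⟨⟨fun f g => Subtype.ext (funext isEmptyElim)⟩,
      ⟨⟨isEmptyElim, fun s => s.elim0, isEmptyElim⟩⟩⟩
  | succ n ih =>
    have hα' : Nat.card α = k 0 + ∑ i ∈ range n, k (i + 1) := by
      rw [hα, sum_range_succ', add_comm]
    have : Nonempty α := (Nat.card_pos_iff.1 (by have := hk 0 n.succ_pos; omega)).1
    obtain ⟨m, hmin⟩ : ∃ m : α, ∀ x, m ≤ x := Finite.exists_min id
    rw [card_isShuffleLabeling_succ k hmin, Nat.card_sigma]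
    have hcompl : ∀ B : {B : Finset α // #B = k 0 ∧ m ∈ B},
        Nat.card {x // x ∉ B.1} = ∑ i ∈ range n, k (i + 1) := fun B => by
      rw [Nat.card_eq_fintype_card, Fintype.card_subtype_compl, ← Nat.card_eq_fintype_card,
        ← Nat.card_eq_fintype_card, Nat.card_eq_finsetCard, B.2.1]
      omega
    simp_rw [ih _ (fun i hi => hk (i + 1) (by omega)) (hcompl _)]
    rw [sum_const, Finset.card_univ, ← Nat.card_eq_fintype_card,
      card_finset_card_eq_and_mem (hk 0 n.succ_pos), smul_eq_mul, prod_range_succ', mul_comm]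
    congr 2
    · funext s
      rw [sum_Ico_add' k s n 1]
    · rw [hα, range_eq_Ico]

lemma card_fin_subtype_Ico {M a b : ℕ} (h : b ≤ M) :
    Nat.card {i : Fin M // a ≤ (i : ℕ) ∧ (i : ℕ) < b} = b - a := by
  rw [← Nat.card_Ico, ← Nat.card_eq_finsetCard]
  exact Nat.card_congr
    { toFun := fun i => ⟨i, Finset.mem_Ico.2 i.2⟩
      invFun := fun x => ⟨⟨x, by have := Finset.mem_Ico.1 x.2; omega⟩, Finset.mem_Ico.1 x.2⟩
      left_inv := fun _ => rfl
      right_inv := fun _ => rfl }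

lemma blockStart_succ (k : ℕ → ℕ) (s : ℕ) : blockStart k (s + 1) = blockStart k s + k s :=
  Finset.sum_range_succ k s

lemma monotone_blockStart (k : ℕ → ℕ) : Monotone (blockStart k) :=
  fun _ _ h => Finset.sum_le_sum_of_subset (Finset.range_subset_range.2 h)

def blockIndex (k : ℕ → ℕ) (n : ℕ) (i : Fin (blockStart k n)) : Fin n :=
  ⟨Nat.findGreatest (fun s => blockStart k s ≤ i) n, by
    refine lt_of_le_of_ne (Nat.findGreatest_le n) fun h => ?_
    have hi := i.2
    rcases Nat.eq_zero_or_pos n with rfl | hn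
    · simp [blockStart] at hi
    · have := (Nat.findGreatest_eq_iff.1 h).2.1 hn.ne'
      omega⟩

section Blocks

variable {k : ℕ → ℕ} {n : ℕ}

lemma blockIndex_eq_iff (i : Fin (blockStart k n)) (s : Fin n) :
    blockIndex k n i = s ↔ blockStart k s ≤ i ∧ (i : ℕ) < blockStart k (s + 1) := by
  rw [Fin.ext_iff, blockIndex, Nat.findGreatest_eq_iff]
  constructor
  · rintro ⟨-, hle, hgt⟩
    refine ⟨?_, not_le.1 (hgt (Nat.lt_succ_self _) s.2)⟩
    rcases Nat.eq_zero_or_pos (s : ℕ) with h0 | hpos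
    · simp [h0, blockStart]
    · exact hle hpos.ne'
  · rintro ⟨hle, hlt⟩
    exact ⟨s.2.le, fun _ => hle, fun t hst _ ht =>
      (hlt.trans_le (monotone_blockStart k hst)).not_ge ht⟩

lemma card_blockIndex_fiber (s : Fin n) : Nat.card {i // blockIndex k n i = s} = k s := by
  simp_rw [blockIndex_eq_iff]
  rw [card_fin_subtype_Ico (monotone_blockStart k s.2), blockStart_succ]
  omega

lemma blockStart_lt_blockStart_succ (hk : ∀ i < n, 0 < k i) {s : ℕ} (hs : s < n) :
    blockStart k s < blockStart k (s + 1) := by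
  rw [blockStart_succ]
  exact Nat.lt_add_of_pos_right (hk s hs)

def blockHead (hk : ∀ i < n, 0 < k i) (s : Fin n) : Fin (blockStart k n) :=
  ⟨blockStart k s, (blockStart_lt_blockStart_succ hk s.2).trans_le (monotone_blockStart k s.2)⟩

lemma blockIndex_blockHead (hk : ∀ i < n, 0 < k i) (s : Fin n) :
    blockIndex k n (blockHead hk s) = s :=
  (blockIndex_eq_iff _ s).2 ⟨le_rfl, blockStart_lt_blockStart_succ hk s.2⟩

lemma blockHead_le (hk : ∀ i < n, 0 < k i) {i : Fin (blockStart k n)} :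
    blockHead hk (blockIndex k n i) ≤ i :=
  Fin.le_def.2 ((blockIndex_eq_iff i _).1 rfl).1

lemma strictMonoOn_blockIndex_fibers_iff (σ : Equiv.Perm (Fin (blockStart k n))) :
    (∀ s, StrictMonoOn σ {i | blockIndex k n i = s}) ↔
      ∀ s < n, ∀ i j : Fin (blockStart k n),
        blockStart k s ≤ (i : ℕ) → (j : ℕ) < blockStart k (s + 1) → i < j → σ i < σ j := by
  constructor
  · intro h s hs i j hi hj hij
    have hij' : (i : ℕ) < j := hij
    exact h ⟨s, hs⟩ ((blockIndex_eq_iff i _).2 ⟨hi, by simp only; omega⟩)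
      ((blockIndex_eq_iff j _).2 ⟨by simp only; omega, hj⟩) hij
  · intro h s i hi j hj hij
    exact h s s.2 i j ((blockIndex_eq_iff i s).1 hi).1 ((blockIndex_eq_iff j s).1 hj).2 hij

lemma isRestrictedGrowth_blockIndex_comp_symm_iff (hk : ∀ i < n, 0 < k i)
    {σ : Equiv.Perm (Fin (blockStart k n))}
    (hσ : ∀ s, StrictMonoOn σ {i | blockIndex k n i = s}) :
    IsRestrictedGrowth (blockIndex k n ∘ σ.symm) ↔
      ∀ t < n, ∀ s < t, ∀ i j : Fin (blockStart k n),
        (i : ℕ) = blockStart k s → (j : ℕ) = blockStart k t → σ i < σ j := by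
  have head_le : ∀ i, σ (blockHead hk (blockIndex k n i)) ≤ σ i := fun i =>
    (hσ _).monotoneOn (blockIndex_blockHead hk _) rfl (blockHead_le hk)
  constructor
  · intro h t ht s hst i j hi hj
    have hj' : j = blockHead hk ⟨t, ht⟩ := Fin.ext hj
    obtain ⟨x, hxj, hx⟩ := h (σ j) ⟨s, hst.trans ht⟩
      (by simpa [hj', blockIndex_blockHead] using hst)
    have hi' : i = blockHead hk (blockIndex k n (σ.symm x)) := by
      rw [Function.comp_apply] at hx
      exact Fin.ext (by simp [hx, hi, blockHead])
    calc σ i ≤ σ (σ.symm x) := hi' ▸ head_le _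
      _ = x := σ.apply_symm_apply x
      _ < σ j := hxj
  · intro h y s hs
    refine ⟨σ (blockHead hk s), ?_, by simp [blockIndex_blockHead]⟩
    calc σ (blockHead hk s) < σ (blockHead hk (blockIndex k n (σ.symm y))) :=
          h _ (Fin.is_lt _) s hs _ _ rfl rfl
      _ ≤ σ (σ.symm y) := head_le _
      _ = y := σ.apply_symm_apply y

lemma isShuffle_iff (hk : ∀ i < n, 0 < k i) (σ : Equiv.Perm (Fin (blockStart k n))) :
    IsShuffle n k σ ↔
      (∀ s, StrictMonoOn σ {i | blockIndex k n i = s}) ∧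
        IsRestrictedGrowth (blockIndex k n ∘ σ.symm) := by
  rw [IsShuffle, ← strictMonoOn_blockIndex_fibers_iff]
  exact and_congr_right fun hσ => (isRestrictedGrowth_blockIndex_comp_symm_iff hk hσ).symm

theorem card_isShuffle_eq (k : ℕ → ℕ) (hk : ∀ i < n, 0 < k i) :
    Nat.card {σ : Equiv.Perm (Fin (blockStart k n)) // IsShuffle n k σ}
      = Nat.card {f : Fin (blockStart k n) → Fin n // IsShuffleLabeling k f} := by
  simp_rw [isShuffle_iff hk, card_perm_strictMonoOn_fibers, card_blockIndex_fiber]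
  rfl

end Blocks

lemma choose_pred_mul_factorial {a b : ℕ} (ha : 0 < a) :
    (a + b - 1).choose (a - 1) * (a + b) * a ! * b ! = a * (a + b)! := by
  obtain ⟨a, rfl⟩ : ∃ a', a = a' + 1 := ⟨a - 1, by omega⟩
  have h := add_choose_mul_factorial_mul_factorial b a
  rw [show a + 1 + b - 1 = b + a by omega, Nat.add_sub_cancel, show a + 1 + b = b + a + 1 by omega,
    factorial_succ, factorial_succ, ← h]
  ring

lemma prod_suffix_factorial (n : ℕ) (k : ℕ → ℕ) :
    ∏ s ∈ range n, (∑ i ∈ Ico s n, k i)! =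
      (∑ i ∈ range n, k i)! * ∏ s ∈ range n, (∑ i ∈ Ico (s + 1) n, k i)! := by
  have h := (prod_range_succ (fun s => (∑ i ∈ Ico s n, k i)!) n).symm.trans
    (prod_range_succ' (fun s => (∑ i ∈ Ico s n, k i)!) n)
  rw [Ico_self, sum_empty, factorial_zero, mul_one, ← range_eq_Ico, mul_comm] at h
  exact h

theorem prod_choose_mul_prod_mul_prod_factorial (n : ℕ) (k : ℕ → ℕ) (hk : ∀ i < n, 0 < k i) :
    (∏ s ∈ range n, (∑ i ∈ Ico s n, k i - 1).choose (k s - 1))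
      * (∏ s ∈ range n, ∑ i ∈ Ico s n, k i) * (∏ i ∈ range n, (k i)!)
      = (∏ i ∈ range n, k i) * (∑ i ∈ range n, k i)! := by
  have hterm : ∀ s ∈ range n,
      (∑ i ∈ Ico s n, k i - 1).choose (k s - 1) * (∑ i ∈ Ico s n, k i) * (k s)!
        * (∑ i ∈ Ico (s + 1) n, k i)! = k s * (∑ i ∈ Ico s n, k i)! := fun s hs => by
    rw [sum_eq_sum_Ico_succ_bot (mem_range.1 hs)]
    exact choose_pred_mul_factorial (hk s (mem_range.1 hs))
  have h := prod_congr rfl hterm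
  rw [prod_mul_distrib, prod_mul_distrib, prod_mul_distrib, prod_mul_distrib,
    prod_suffix_factorial, ← mul_assoc] at h
  exact Nat.eq_of_mul_eq_mul_right (prod_pos fun s _ => factorial_pos _) h

theorem shuffle_count_general (n : ℕ) (k : ℕ → ℕ) (hk : ∀ i < n, 0 < k i)
    (N : ℕ) (hN : N = ∑ i ∈ Finset.range n, k i) :
    Nat.card {σ : Equiv.Perm (Fin N) // IsShuffle n k σ}
      * (∏ s ∈ Finset.range n, ∑ i ∈ Finset.Ico s n, k i)
      * (∏ i ∈ Finset.range n, (k i)!)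
    = (∏ i ∈ Finset.range n, k i) * N ! := by
  obtain rfl : N = blockStart k n := hN
  rw [card_isShuffle_eq k hk, card_isShuffleLabeling (α := Fin (blockStart k n)) n k hk
    (Nat.card_fin _)]
  exact prod_choose_mul_prod_mul_prod_factorial n k hk

/-- The number of shuffle permutations of type `(k₁, …, kₙ)` satisfies
`card · ∏ₛ (kₛ + ⋯ + kₙ) · ∏ᵢ kᵢ! = (∏ᵢ kᵢ) · N!`. -/
theorem shuffle_count (n : ℕ) (hn : 1 ≤ n) (k : ℕ → ℕ) (hk : ∀ i < n, 0 < k i)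
    (N : ℕ) (hN : N = ∑ i ∈ Finset.range n, k i) :
    Nat.card {σ : Equiv.Perm (Fin N) // IsShuffle n k σ}
      * (∏ s ∈ Finset.range n, ∑ i ∈ Finset.Ico s n, k i)
      * (∏ i ∈ Finset.range n, (k i)!)
    = (∏ i ∈ Finset.range n, k i) * N ! :=
  shuffle_count_general n k hk N hN
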